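/- Let f = z_{j_1}⋯z_{j_t} be a monomial of degree t ≤ r with m ∉ {j_1,…,j_t}, I = {j_1,…,j_t} ∩ [q−1], and f_y = (z_1⋯z_{q−1}+1)(z_m+1). Then wt(Eval(f_y + f)) − wt(Eval(f_y)) = 2^{m−t−(q−1−|I|)} ≥ 2^{m−r−q+1}. -/

import Mathlib

/-!
Over `𝔽₂`, `wt (f_y + f) = wt f_y + wt f - 2 wt (f_y f)`. The monomial `f = ∏_{j ∈ J} z_j`
has weight `2^(m - t)`, and `f_y f = 1` exactly when `f = 1`, `z_m = 0` and not all of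
`z_1, …, z_{q-1}` are `1`, which happens on `2^(m - t - 1) - 2^(m - |J ∪ [q-1]| - 1)` points.
So the weight grows by `2^(m - |J ∪ [q-1]|) = 2^(m - t - (q - 1 - |I|))`.
-/

open Finset

theorem card_filter_add_eq_one_add_two_mul {α : Type*} [Fintype α] (f g : α → ZMod 2) :
    #{x | f x + g x = 1} + 2 * #{x | f x = 1 ∧ g x = 1} = #{x | f x = 1} + #{x | g x = 1} := by
  simp only [card_filter, mul_sum, ← sum_add_distrib]
  refine sum_congr rfl fun x _ => ?_
  generalize f x = a
  generalize g x = b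
  revert a b
  decide

theorem card_filter_forall_mem_eq {ι R : Type*} [Fintype ι] [DecidableEq ι] [Fintype R]
    [DecidableEq R] (A : Finset ι) (b : ι → R) :
    #{z : ι → R | ∀ i ∈ A, z i = b i} = Fintype.card R ^ (Fintype.card ι - #A) := by
  have hcube : ({z : ι → R | ∀ i ∈ A, z i = b i} : Finset _)
      = Fintype.piFinset fun i => if i ∈ A then {b i} else univ := by
    ext z
    simp only [mem_filter, mem_univ, true_and, Fintype.mem_piFinset]
    refine forall_congr' fun i => ?_
    split_ifs with h <;> simp [h]
  rw [hcube, Fintype.card_piFinset]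
  simp only [apply_ite card, card_singleton, card_univ]
  rw [prod_ite, prod_const_one, one_mul, prod_const, filter_not,
    card_sdiff_of_subset (subset_univ _), filter_mem_eq_inter, univ_inter, card_univ]

theorem ZMod.prod_eq_one_iff {ι : Type*} (s : Finset ι) (z : ι → ZMod 2) :
    ∏ i ∈ s, z i = 1 ↔ ∀ i ∈ s, z i = 1 := by
  have h : ∀ a : ZMod 2, a = 1 ↔ a ≠ 0 := by decide
  simp only [h, ne_eq, prod_eq_zero_iff, not_exists, not_and]

section
variable {ι : Type*} [Fintype ι] [DecidableEq ι]

theorem card_filter_eq_zero_and_forall_mem_eq_one {M : ι} {A : Finset ι} (hM : M ∉ A) :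
    #{z : ι → ZMod 2 | z M = 0 ∧ ∀ i ∈ A, z i = 1} = 2 ^ (Fintype.card ι - (#A + 1)) := by
  calc _ = #{z : ι → ZMod 2 |
          ∀ i ∈ insert M A, z i = Function.update (1 : ι → ZMod 2) M 0 i} := by
        congr! 3 with z
        rw [forall_mem_insert, Function.update_self]
        refine and_congr_right fun _ => forall₂_congr fun i hi => ?_
        rw [Function.update_of_ne (ne_of_mem_of_not_mem hi hM), Pi.one_apply]
    _ = _ := by rw [card_filter_forall_mem_eq, ZMod.card, card_insert_of_notMem hM]

variable {M : ι} {P J : Finset ι}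

theorem card_filter_mul_eq_one_and_prod_eq_one (hMP : M ∉ P) (hMJ : M ∉ J) :
    #{z : ι → ZMod 2 | ((∏ i ∈ P, z i) + 1) * (z M + 1) = 1 ∧ ∏ j ∈ J, z j = 1}
        + 2 ^ (Fintype.card ι - (#(J ∪ P) + 1))
      = 2 ^ (Fintype.card ι - (#J + 1)) := by
  have key : ∀ x y : ZMod 2, (x + 1) * (y + 1) = 1 ↔ y = 0 ∧ x ≠ 1 := by decide
  rw [← card_filter_eq_zero_and_forall_mem_eq_one hMJ,
    ← card_filter_eq_zero_and_forall_mem_eq_one (by simp [hMP, hMJ] : M ∉ J ∪ P),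
    ← card_filter_add_card_filter_not (fun z : ι → ZMod 2 => ∀ i ∈ P, z i = 1)
      (s := {z | z M = 0 ∧ ∀ i ∈ J, z i = 1}), add_comm, filter_filter, filter_filter]
  congr 2 <;> refine filter_congr fun z _ => ?_ <;>
    simp only [key, ne_eq, ZMod.prod_eq_one_iff, forall_mem_union] <;> tauto

theorem card_filter_add_prod_eq_one (hMP : M ∉ P) (hMJ : M ∉ J) :
    #{z : ι → ZMod 2 | ((∏ i ∈ P, z i) + 1) * (z M + 1) + ∏ j ∈ J, z j = 1}
      = #{z : ι → ZMod 2 | ((∏ i ∈ P, z i) + 1) * (z M + 1) = 1}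
          + 2 ^ (Fintype.card ι - #(J ∪ P)) := by
  have hsum := card_filter_add_eq_one_add_two_mul
    (fun z : ι → ZMod 2 => ((∏ i ∈ P, z i) + 1) * (z M + 1)) (fun z => ∏ j ∈ J, z j)
  have hJ := card_filter_forall_mem_eq J (1 : ι → ZMod 2)
  have hmul := card_filter_mul_eq_one_and_prod_eq_one hMP hMJ
  simp only [Pi.one_apply, ← ZMod.prod_eq_one_iff, ZMod.card] at hJ hsum
  have hJ_lt : #J < Fintype.card ι := card_lt_univ_of_notMem hMJ
  have hJP_lt : #(J ∪ P) < Fintype.card ι := card_lt_univ_of_notMem (x := M) (by simp [hMP, hMJ])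
  rw [show Fintype.card ι - #J = Fintype.card ι - (#J + 1) + 1 by omega, pow_succ] at hJ
  rw [show Fintype.card ι - #(J ∪ P) = Fintype.card ι - (#(J ∪ P) + 1) + 1 by omega, pow_succ]
  omega

end

/-- Let f = z_{j_1}⋯z_{j_t} be a monomial of degree t ≤ r (variable set J)
not containing z_m, I = J ∩ [q−1], and f_y = (z_1⋯z_{q−1}+1)(z_m+1). Then
wt(Eval(f_y + f)) − wt(Eval(f_y)) = 2^{m−t−(q−1−|I|)} ≥ 2^{m−r−q+1}. -/
theorem weight_increase_monomial_without_last_variable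
    (m q r : ℕ) (hq : 2 ≤ q) (hm : q ≤ m)
    (J : Finset (Fin m)) (hJ : (⟨m - 1, by omega⟩ : Fin m) ∉ J)
    (htr : J.card ≤ r) :
    (Finset.univ.filter (fun z : Fin m → ZMod 2 =>
        ((∏ i ∈ Finset.univ.filter (fun i : Fin m => (i : ℕ) < q - 1), z i) + 1) *
          (z ⟨m - 1, by omega⟩ + 1) = 1)).card
      ≤ (Finset.univ.filter (fun z : Fin m → ZMod 2 =>
        ((∏ i ∈ Finset.univ.filter (fun i : Fin m => (i : ℕ) < q - 1), z i) + 1) *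
          (z ⟨m - 1, by omega⟩ + 1) + (∏ j ∈ J, z j) = 1)).card ∧
    (Finset.univ.filter (fun z : Fin m → ZMod 2 =>
        ((∏ i ∈ Finset.univ.filter (fun i : Fin m => (i : ℕ) < q - 1), z i) + 1) *
          (z ⟨m - 1, by omega⟩ + 1) + (∏ j ∈ J, z j) = 1)).card
      - (Finset.univ.filter (fun z : Fin m → ZMod 2 =>
        ((∏ i ∈ Finset.univ.filter (fun i : Fin m => (i : ℕ) < q - 1), z i) + 1) *
          (z ⟨m - 1, by omega⟩ + 1) = 1)).card
      = 2 ^ (m - J.card - (q - 1 - (J.filter (fun j : Fin m => (j : ℕ) < q - 1)).card)) ∧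
    2 ^ (m - r - (q - 1))
      ≤ 2 ^ (m - J.card - (q - 1 - (J.filter (fun j : Fin m => (j : ℕ) < q - 1)).card)) := by
  set P : Finset (Fin m) := {i | (i : ℕ) < q - 1}
  have hMP : (⟨m - 1, by omega⟩ : Fin m) ∉ P := by simp [P]; omega
  have hP : #P = q - 1 := by simp [P, Fin.card_filter_val_lt]; omega
  have hJP : #(J ∩ P) = #(J.filter fun j : Fin m => (j : ℕ) < q - 1) := by
    rw [inter_filter, inter_univ]
  have hunion := card_union_add_card_inter J P
  have hinter : #(J ∩ P) ≤ #P := card_le_card inter_subset_right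
  rw [card_filter_add_prod_eq_one hMP hJ, Fintype.card_fin, Nat.add_sub_cancel_left,
    show m - #(J ∪ P) = m - #J - (q - 1 - #(J ∩ P)) by omega, hJP]
  exact ⟨Nat.le_add_right _ _, rfl, Nat.pow_le_pow_right two_pos (by omega)⟩
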